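/- Let Ω ⊂ ℝ^d be a nonempty compact set, let f : Ω → ℝ be continuous, and let x ∈ Ω. Then: (i) for all s, s' > 0, |(T_s f)(x) − (T_{s'} f)(x)| ≤ (diam Ω)² · |s − s'| / (2 · min(s, s')²); (ii) the map s ↦ (T_s f)(x) is continuous on [0, ∞), and in particular (T_s f)(x) → f(x) as s → 0⁺. -/

import Mathlib

open MeasureTheory Filter

/-- The `s`-scaled Bellman operator on a set `Ω`:
`(T_s f)(x) = min_{y ∈ Ω} { ‖x−y‖²/(2s) + f(y) }` for `s > 0`, and `T_0 f = f`. -/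
noncomputable def bellman {d : ℕ} (Ω : Set (EuclideanSpace ℝ (Fin d))) (s : ℝ)
    (f : EuclideanSpace ℝ (Fin d) → ℝ) (x : EuclideanSpace ℝ (Fin d)) : ℝ :=
  if s = 0 then f x else sInf ((fun y => ‖x - y‖ ^ 2 / (2 * s) + f y) '' Ω)

/-!
For a fixed `y`, changing `s` to `s'` moves the cost `‖x - y‖² / (2s) + f y` by
`‖x - y‖² |s - s'| / (2 s s') ≤ diam(Ω)² |s - s'| / (2 min(s, s')²)`, and a uniform
bound on the costs passes to their infima; this gives (i) and continuity at every `s > 0`.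
At `s = 0`: taking `y = x` gives `T_s f (x) ≤ f x`, while a point `y` at distance `≥ δ`
from `x` pays at least `δ² / (2s) → ∞`, so for small `s` only points near `x`, where `f` is
close to `f x`, compete for the minimum.
-/

open Set Topology

lemma csInf_image_le_csInf_image_add {α : Type*} {Ω : Set α} (hne : Ω.Nonempty)
    {g h : α → ℝ} (hg : BddBelow (g '' Ω)) {C : ℝ} (hC : ∀ y ∈ Ω, g y ≤ h y + C) :
    sInf (g '' Ω) ≤ sInf (h '' Ω) + C := by
  have : sInf (g '' Ω) - C ≤ sInf (h '' Ω) := by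
    refine le_csInf (hne.image h) ?_
    rintro _ ⟨y, hy, rfl⟩
    linarith [csInf_le hg ⟨y, hy, rfl⟩, hC y hy]
  linarith

lemma div_two_mul_sub_div_two_mul_le {a b s s' : ℝ} (ha : 0 ≤ a) (hab : a ≤ b)
    (hs : 0 < s) (hs' : 0 < s') :
    a / (2 * s) - a / (2 * s') ≤ b * |s - s'| / (2 * min s s' ^ 2) := by
  have hmin : 0 < min s s' := lt_min hs hs'
  have hmin_sq : min s s' ^ 2 ≤ s * s' := by
    rw [sq]; exact mul_le_mul (min_le_left _ _) (min_le_right _ _) hmin.le hs.le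
  have hnum : a * (s' - s) ≤ b * |s - s'| :=
    calc a * (s' - s) ≤ a * |s - s'| :=
          mul_le_mul_of_nonneg_left (abs_sub_comm s s' ▸ le_abs_self _) ha
      _ ≤ b * |s - s'| := mul_le_mul_of_nonneg_right hab (abs_nonneg _)
  have hb : 0 ≤ b := ha.trans hab
  calc a / (2 * s) - a / (2 * s') = a * (s' - s) / (2 * (s * s')) := by
        field_simp
    _ ≤ b * |s - s'| / (2 * (s * s')) := by gcongr
    _ ≤ b * |s - s'| / (2 * min s s' ^ 2) := by gcongr

section Bellman

variable {d : ℕ} {Ω : Set (EuclideanSpace ℝ (Fin d))} {f : EuclideanSpace ℝ (Fin d) → ℝ}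
  {x : EuclideanSpace ℝ (Fin d)}

lemma bellman_of_ne_zero {s : ℝ} (hs : s ≠ 0) :
    bellman Ω s f x = sInf ((fun y => ‖x - y‖ ^ 2 / (2 * s) + f y) '' Ω) :=
  if_neg hs

lemma bddBelow_image_bellman_cost (hcomp : IsCompact Ω) (hf : ContinuousOn f Ω) (s : ℝ) :
    BddBelow ((fun y => ‖x - y‖ ^ 2 / (2 * s) + f y) '' Ω) :=
  (hcomp.image_of_continuousOn
    ((((continuous_const.sub continuous_id).norm.pow 2).div_const _).continuousOn.add
      hf)).bddBelow

lemma bellman_le_add (hne : Ω.Nonempty) (hcomp : IsCompact Ω) (hf : ContinuousOn f Ω)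
    (hx : x ∈ Ω) {s s' : ℝ} (hs : 0 < s) (hs' : 0 < s') :
    bellman Ω s f x ≤ bellman Ω s' f x + Metric.diam Ω ^ 2 * |s - s'| / (2 * min s s' ^ 2) := by
  rw [bellman_of_ne_zero hs.ne', bellman_of_ne_zero hs'.ne']
  refine csInf_image_le_csInf_image_add hne (bddBelow_image_bellman_cost hcomp hf s) ?_
  intro y hy
  have hdist : ‖x - y‖ ≤ Metric.diam Ω := by
    rw [← dist_eq_norm]; exact Metric.dist_le_diam_of_mem hcomp.isBounded hx hy
  have := div_two_mul_sub_div_two_mul_le (sq_nonneg ‖x - y‖)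
    (pow_le_pow_left₀ (norm_nonneg _) hdist 2) hs hs'
  linarith

lemma abs_bellman_sub_le (hne : Ω.Nonempty) (hcomp : IsCompact Ω) (hf : ContinuousOn f Ω)
    (hx : x ∈ Ω) {s s' : ℝ} (hs : 0 < s) (hs' : 0 < s') :
    |bellman Ω s f x - bellman Ω s' f x| ≤
      Metric.diam Ω ^ 2 * |s - s'| / (2 * min s s' ^ 2) := by
  have h₁ := bellman_le_add hne hcomp hf hx hs hs'
  have h₂ := bellman_le_add hne hcomp hf hx hs' hs
  rw [abs_sub_comm s' s, min_comm s' s] at h₂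
  rw [abs_sub_le_iff]
  constructor <;> linarith

lemma bellman_le_apply (hcomp : IsCompact Ω) (hf : ContinuousOn f Ω) (hx : x ∈ Ω) (s : ℝ) :
    bellman Ω s f x ≤ f x := by
  rcases eq_or_ne s 0 with rfl | hs
  · exact (if_pos rfl).le
  rw [bellman_of_ne_zero hs]
  simpa using csInf_le (bddBelow_image_bellman_cost (x := x) hcomp hf s) (mem_image_of_mem _ hx)

lemma eventually_sub_le_bellman (hne : Ω.Nonempty) (hcomp : IsCompact Ω)
    (hf : ContinuousOn f Ω) (hx : x ∈ Ω) {ε : ℝ} (hε : 0 < ε) :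
    ∀ᶠ s in 𝓝[>] 0, f x - ε ≤ bellman Ω s f x := by
  obtain ⟨δ, hδ, hnear⟩ := Metric.continuousWithinAt_iff.1 (hf x hx) ε hε
  obtain ⟨m, hm⟩ := (hcomp.image_of_continuousOn hf).bddBelow
  have hpenalty : ∀ᶠ s in 𝓝[>] 0, f x - ε - m ≤ δ ^ 2 / (2 * s) := by
    have : Tendsto (fun s : ℝ => δ ^ 2 / 2 * s⁻¹) (𝓝[>] 0) atTop :=
      tendsto_inv_nhdsGT_zero.const_mul_atTop (by positivity)
    filter_upwards [this.eventually_ge_atTop (f x - ε - m)] with s hs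
    exact hs.trans_eq (by ring)
  filter_upwards [hpenalty, self_mem_nhdsWithin] with s hpen (hs : 0 < s)
  rw [bellman_of_ne_zero hs.ne']
  refine le_csInf (hne.image _) ?_
  rintro _ ⟨y, hy, rfl⟩
  have hcost : 0 ≤ ‖x - y‖ ^ 2 / (2 * s) := by positivity
  by_cases hyx : dist y x < δ
  · have := (abs_lt.1 (Real.dist_eq _ _ ▸ hnear hy hyx)).1
    linarith
  · have hfar : δ ^ 2 / (2 * s) ≤ ‖x - y‖ ^ 2 / (2 * s) := by
      rw [← dist_eq_norm, dist_comm]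
      gcongr
      exact not_lt.1 hyx
    linarith [hm (mem_image_of_mem f hy)]

lemma tendsto_bellman_nhdsGT_zero (hne : Ω.Nonempty) (hcomp : IsCompact Ω)
    (hf : ContinuousOn f Ω) (hx : x ∈ Ω) :
    Tendsto (fun s => bellman Ω s f x) (𝓝[>] 0) (𝓝 (f x)) := by
  refine tendsto_order.2 ⟨fun a ha => ?_, fun a ha => ?_⟩
  · filter_upwards [eventually_sub_le_bellman hne hcomp hf hx (half_pos (sub_pos.2 ha))]
      with s hs
    linarith
  · exact Eventually.of_forall fun s => (bellman_le_apply hcomp hf hx s).trans_lt ha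

lemma continuousAt_bellman_of_pos (hne : Ω.Nonempty) (hcomp : IsCompact Ω)
    (hf : ContinuousOn f Ω) (hx : x ∈ Ω) {s : ℝ} (hs : 0 < s) :
    ContinuousAt (fun t => bellman Ω t f x) s := by
  have hbound : Tendsto (fun t => Metric.diam Ω ^ 2 * |t - s| / (2 * min t s ^ 2)) (𝓝 s)
      (𝓝 0) := by
    have : ContinuousAt (fun t => Metric.diam Ω ^ 2 * |t - s| / (2 * min t s ^ 2)) s := by
      fun_prop (disch := simp [hs.ne'])
    simpa using this.tendsto
  rw [ContinuousAt, tendsto_iff_dist_tendsto_zero]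
  refine squeeze_zero' (Eventually.of_forall fun _ => dist_nonneg) ?_ hbound
  filter_upwards [lt_mem_nhds hs] with t ht
  rw [Real.dist_eq]
  exact abs_bellman_sub_le hne hcomp hf hx ht hs

lemma continuousOn_bellman (hne : Ω.Nonempty) (hcomp : IsCompact Ω)
    (hf : ContinuousOn f Ω) (hx : x ∈ Ω) :
    ContinuousOn (fun s => bellman Ω s f x) (Ici 0) := by
  intro s hs
  rcases (mem_Ici.1 hs).eq_or_lt with rfl | hpos
  · rw [ContinuousWithinAt, ← Ioi_insert, nhdsWithin_insert]
    refine tendsto_pure_nhds _ _ |>.sup ?_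
    simpa only [bellman, if_pos] using tendsto_bellman_nhdsGT_zero hne hcomp hf hx
  · exact (continuousAt_bellman_of_pos hne hcomp hf hx hpos).continuousWithinAt

end Bellman

/-- for a nonempty compact `Ω`, continuous `f` and `x ∈ Ω`:
(i) for `s, s' > 0`, `|T_s f (x) − T_{s'} f (x)| ≤ diam(Ω)²·|s−s'| / (2·min(s,s')²)`;
(ii) `s ↦ T_s f (x)` is continuous on `[0,∞)`, and in particular `T_s f (x) → f(x)` as
`s → 0⁺`. -/
theorem stmt17 {d : ℕ} (Ω : Set (EuclideanSpace ℝ (Fin d)))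
    (hne : Ω.Nonempty) (hcomp : IsCompact Ω)
    (f : EuclideanSpace ℝ (Fin d) → ℝ) (hf : ContinuousOn f Ω)
    (x : EuclideanSpace ℝ (Fin d)) (hx : x ∈ Ω) :
    (∀ s s' : ℝ, 0 < s → 0 < s' →
      |bellman Ω s f x - bellman Ω s' f x| ≤
        Metric.diam Ω ^ 2 * |s - s'| / (2 * min s s' ^ 2)) ∧
    ContinuousOn (fun s : ℝ => bellman Ω s f x) (Set.Ici 0) ∧
    Tendsto (fun s : ℝ => bellman Ω s f x) (nhdsWithin 0 (Set.Ioi 0)) (nhds (f x)) :=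
  ⟨fun _ _ hs hs' => abs_bellman_sub_le hne hcomp hf hx hs hs',
    continuousOn_bellman hne hcomp hf hx, tendsto_bellman_nhdsGT_zero hne hcomp hf hx⟩
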